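/- arXiv:2101.09813 — 6 statements merged into one kernel-verified Lean document; each statement's English description precedes it below -/
import Mathlib

section
/- Let m ≥ 1, r > 0, and let X, Y : Fin n → ℝ^m be injective families of points, each of whose ranges is in general position. Suppose that for all indices i, j one has dist(X i, X j) ≤ 2r if and only if dist(Y i, Y j) ≤ 2r, and that whenever dist(X i, X j) ≤ 2r one has dist(X i, X j) = dist(Y i, Y j). Then for every nonempty subset s ⊆ Fin n, the intersection ⋂_{i ∈ s}(B̄_r(X i) ∩ V_{X i}) (Voronoi regions taken with respect to the range of X) is nonempty if and only if ⋂_{i ∈ s}(B̄_r(Y i) ∩ V_{Y i}) (Voronoi regions taken with respect to the range of Y) is nonempty. In other words, the local distance data (which pairs are within distance 2r, and the exact distances of those pairs) determines the alpha complex. -/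
/-!
Fix `i₀ ∈ s` and let `y` minimise the distance to `X i₀` over the intersection `C` of the
Voronoi cells of `s`; call that distance `d ≤ r`. The points `X a` at distance `d` from `y`
are pairwise within `2r`, so their distances are those of the `Y a`, and an isometry `F` of
the space maps them to the `Y a`. Since perpendicular bisectors are affine and balls are
strictly convex, `y` is the only point at distance `d` from all these `X a`: otherwise moving
from `y` towards another such point would stay in `C` and get closer to `X i₀`. Hence `F y`
lies in the Voronoi cells of the `Y a`: if some `Y k` were closer to `F y` than `d`, the
configuration of `Y k` and the `Y a` would again be local, and an isometry carrying it back
would fix `y` while bringing `X k` within `d` of it.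
-/

open Metric Set

open Filter Topology AffineMap
open scoped RealInnerProductSpace

theorem IsClosed.exists_isMinOn_dist {α : Type*} [PseudoMetricSpace α] [ProperSpace α]
    {C : Set α} (hC : IsClosed C) (hne : C.Nonempty) (x : α) :
    ∃ y ∈ C, IsMinOn (dist · x) C y := by
  obtain ⟨y, hyC, hy⟩ := hC.exists_infDist_eq_dist hne x
  refine ⟨y, hyC, fun w hw => ?_⟩
  show dist y x ≤ dist w x
  simpa only [dist_comm _ x, ← hy] using infDist_le_dist_of_mem hw

section Voronoi

variable {ι P : Type*} [PseudoMetricSpace P]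

def voronoiCell (X : ι → P) (i : ι) : Set P :=
  {y | ∀ j, dist y (X i) ≤ dist y (X j)}

theorem isClosed_voronoiCell (X : ι → P) (i : ι) : IsClosed (voronoiCell X i) := by
  simp only [voronoiCell, ofPred_forall]
  exact isClosed_iInter fun j => isClosed_le (by fun_prop) (by fun_prop)

theorem dist_eq_of_mem_voronoiCell {X : ι → P} {i j : ι} {y : P} (hi : y ∈ voronoiCell X i)
    (hj : y ∈ voronoiCell X j) : dist y (X i) = dist y (X j) :=
  (hi j).antisymm (hj i)

def alphaCell (X : ι → P) (r : ℝ) (s : Finset ι) : Set P :=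
  ⋂ i ∈ s, closedBall (X i) r ∩ voronoiCell X i

end Voronoi

theorem congruent_subtype_of_dist_le {ι P Q : Type*} [PseudoMetricSpace P] [PseudoMetricSpace Q]
    {X : ι → P} {Y : ι → Q} {r : ℝ}
    (hXY : ∀ i j, dist (X i) (X j) ≤ 2 * r → dist (X i) (X j) = dist (Y i) (Y j))
    {S : Set ι} {c : P} (hS : ∀ a ∈ S, dist c (X a) ≤ r) :
    Congruent (fun a : S => X a) (fun a : S => Y a) :=
  congruent_iff_dist_eq.2 fun a b =>
    hXY a b <| (dist_triangle_left _ _ c).trans (by linarith [hS a a.2, hS b b.2])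

variable {ι E : Type*} [NormedAddCommGroup E] [InnerProductSpace ℝ E]

theorem exists_linearIsometry_of_inner_eq [FiniteDimensional ℝ E] {u v : ι → E}
    (h : ∀ a b, ⟪u a, u b⟫ = ⟪v a, v b⟫) : ∃ Φ : E →ₗᵢ[ℝ] E, ∀ a, Φ (u a) = v a := by
  set Lu := Finsupp.linearCombination ℝ u
  set Lv := Finsupp.linearCombination ℝ v
  have hL : (innerₗ E).compl₁₂ Lu Lu = (innerₗ E).compl₁₂ Lv Lv := by
    ext a b
    simpa [Lu, Lv] using h a b
  have hnorm : ∀ c, ‖Lv c‖ = ‖Lu c‖ := fun c => by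
    rw [norm_eq_sqrt_real_inner, norm_eq_sqrt_real_inner]
    exact congrArg Real.sqrt (LinearMap.congr_fun₂ hL c c).symm
  have hker : LinearMap.ker Lu ≤ LinearMap.ker Lv := fun c hc => by
    simpa [← norm_eq_zero, hnorm] using hc
  let φ : LinearMap.range Lu →ₗ[ℝ] E :=
    ((LinearMap.ker Lu).liftQ Lv hker).comp Lu.quotKerEquivRange.symm.toLinearMap
  have hφ : ∀ c, φ ⟨Lu c, LinearMap.mem_range_self Lu c⟩ = Lv c := fun c => by
    simp [φ, LinearMap.quotKerEquivRange_symm_apply_image]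
  let Ψ : LinearMap.range Lu →ₗᵢ[ℝ] E := ⟨φ, by rintro ⟨_, c, rfl⟩; simp [hφ, hnorm]⟩
  refine ⟨Ψ.extend, fun a => ?_⟩
  have := Ψ.extend_apply ⟨Lu (Finsupp.single a 1), LinearMap.mem_range_self Lu _⟩
  rw [show Ψ _ = Lv (Finsupp.single a 1) from hφ _] at this
  simpa [Lu, Lv] using this

theorem Congruent.exists_isometry [FiniteDimensional ℝ E] {p q : ι → E} (h : Congruent p q) :
    ∃ f : E → E, Isometry f ∧ ∀ a, f (p a) = q a := by
  rcases isEmpty_or_nonempty ι with hι | ⟨⟨a₀⟩⟩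
  · exact ⟨id, isometry_id, isEmptyElim⟩
  rw [congruent_iff_dist_eq] at h
  obtain ⟨Φ, hΦ⟩ := exists_linearIsometry_of_inner_eq (u := fun a => p a - p a₀)
    (v := fun a => q a - q a₀) fun a b => by
      simp only [real_inner_eq_norm_mul_self_add_norm_mul_self_sub_norm_sub_mul_self_div_two,
        sub_sub_sub_cancel_right, ← dist_eq_norm, h]
  refine ⟨fun x => q a₀ + Φ (x - p a₀), Isometry.of_dist_eq fun x y => ?_, fun a => by simp [hΦ]⟩
  simp [dist_eq_norm, ← map_sub]

theorem eq_of_isMinOn_dist_of_forall_dist_eq [Finite ι] {X : ι → E} {s : Finset ι} {i₀ : ι}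
    (hi₀ : i₀ ∈ s) {y z : E} (hy : y ∈ ⋂ i ∈ s, voronoiCell X i)
    (hmin : IsMinOn (dist · (X i₀)) (⋂ i ∈ s, voronoiCell X i) y)
    (hz : ∀ a, dist y (X a) = dist y (X i₀) → dist z (X a) = dist y (X a)) : z = y := by
  by_contra hzy
  set d := dist y (X i₀)
  have hyi₀ : y ∈ voronoiCell X i₀ := mem_iInter₂.1 hy i₀ hi₀
  have hfar : ∀ᶠ t in 𝓝[>] (0 : ℝ), ∀ l, dist y (X l) ≠ d → d < dist (lineMap y z t) (X l) := by
    refine eventually_all.2 fun l => ?_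
    by_cases hl : dist y (X l) = d
    · simp [hl]
    have hlim :
        Tendsto (fun t : ℝ => dist (lineMap y z t) (X l)) (𝓝[>] 0) (𝓝 (dist y (X l))) := by
      have : Continuous fun t : ℝ => dist (lineMap y z t) (X l) := by fun_prop
      simpa using this.continuousWithinAt.tendsto (x := 0) (s := Ioi 0)
    exact (hlim.eventually (lt_mem_nhds ((hyi₀ l).lt_of_ne' hl))).mono fun _ h _ => h
  obtain ⟨t, hfar_t, ht⟩ := (hfar.and (Ioo_mem_nhdsGT one_pos)).exists
  set w := lineMap y z t
  have hw : w ∈ openSegment ℝ y z := openSegment_eq_image_lineMap ℝ y z ▸ ⟨t, ht, rfl⟩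
  have hnear : ∀ a, dist y (X a) = d → dist w (X a) < d := fun a ha => by
    rw [← mem_ball, ← ha]
    refine openSegment_subset_ball_of_ne ?_ ?_ (Ne.symm hzy) hw <;>
      simp only [mem_closedBall, hz a ha, le_refl]
  have hbis : ∀ a b, dist y (X a) = d → dist y (X b) = d → dist w (X a) = dist w (X b) :=
    fun a b ha hb => by
      rw [← AffineSubspace.mem_perpBisector_iff_dist_eq]
      refine lineMap_mem t ?_ ?_ <;> rw [AffineSubspace.mem_perpBisector_iff_dist_eq]
      · rw [ha, hb]
      · rw [hz a ha, hz b hb, ha, hb]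
  have hwC : w ∈ ⋂ i ∈ s, voronoiCell X i := by
    refine mem_iInter₂.2 fun i hi j => ?_
    have hid : dist y (X i) = d := dist_eq_of_mem_voronoiCell (mem_iInter₂.1 hy i hi) hyi₀
    by_cases hj : dist y (X j) = d
    · exact (hbis i j hid hj).le
    · exact (hnear i hid).le.trans (hfar_t j hj).le
  exact (hnear i₀ rfl).not_ge (hmin hwC)

theorem alphaCell_nonempty_of_dist_eq [FiniteDimensional ℝ E] [Finite ι] {X Y : ι → E} {r : ℝ}
    (hXY : ∀ i j, dist (X i) (X j) ≤ 2 * r → dist (X i) (X j) = dist (Y i) (Y j))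
    (hYX : ∀ i j, dist (Y i) (Y j) ≤ 2 * r → dist (Y i) (Y j) = dist (X i) (X j))
    (s : Finset ι) (h : (alphaCell X r s).Nonempty) : (alphaCell Y r s).Nonempty := by
  obtain rfl | ⟨i₀, hi₀⟩ := s.eq_empty_or_nonempty
  · simp [alphaCell]
  obtain ⟨y₀, hy₀⟩ := h
  simp only [alphaCell, mem_iInter₂, mem_inter_iff] at hy₀
  set C := ⋂ i ∈ s, voronoiCell X i
  have hy₀C : y₀ ∈ C := mem_iInter₂.2 fun i hi => (hy₀ i hi).2
  have hC : IsClosed C := isClosed_biInter fun i _ => isClosed_voronoiCell X i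
  obtain ⟨y, hyC, hmin⟩ := hC.exists_isMinOn_dist ⟨y₀, hy₀C⟩ (X i₀)
  set d := dist y (X i₀)
  have hdr : d ≤ r := (hmin hy₀C).trans (mem_closedBall.1 (hy₀ i₀ hi₀).1)
  have hyi₀ : y ∈ voronoiCell X i₀ := mem_iInter₂.1 hyC i₀ hi₀
  set T := {a | dist y (X a) = d}
  obtain ⟨F, hF, hFX⟩ :=
    (congruent_subtype_of_dist_le hXY (S := T) fun a ha => (le_of_eq ha).trans hdr).exists_isometry
  have hFd : ∀ a ∈ T, dist (F y) (Y a) = d := fun a ha => by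
    rw [← hFX ⟨a, ha⟩, hF.dist_eq]
    exact ha
  have hcell : ∀ a ∈ T, F y ∈ voronoiCell Y a := by
    intro a ha k
    rw [hFd a ha]
    by_contra! hk
    have hkT : ∀ b ∈ insert k T, dist (F y) (Y b) ≤ r := by
      rintro b (rfl | hb)
      · linarith
      · exact (hFd b hb).trans_le hdr
    obtain ⟨G, hG, hGY⟩ := (congruent_subtype_of_dist_le hYX hkT).exists_isometry
    have hGX : ∀ b ∈ insert k T, dist (G (F y)) (X b) = dist (F y) (Y b) := fun b hb => by
      rw [← hGY ⟨b, hb⟩, hG.dist_eq]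
    have hGy : G (F y) = y := eq_of_isMinOn_dist_of_forall_dist_eq hi₀ hyC hmin fun b hb =>
      (hGX b (Set.mem_insert_of_mem k hb)).trans ((hFd b hb).trans hb.symm)
    have := hGX k (Set.mem_insert k T)
    rw [hGy] at this
    linarith [hyi₀ k]
  refine ⟨F y, mem_iInter₂.2 fun i hi => ?_⟩
  have hiT : i ∈ T := dist_eq_of_mem_voronoiCell (mem_iInter₂.1 hyC i hi) hyi₀
  exact ⟨mem_closedBall.2 ((hFd i hiT).trans_le hdr), hcell i hiT⟩

theorem alpha_complex_determined_by_local_distances_general {m n : ℕ} (r : ℝ)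
    (X Y : Fin n → EuclideanSpace ℝ (Fin m))
    (hiff : ∀ i j, dist (X i) (X j) ≤ 2 * r ↔ dist (Y i) (Y j) ≤ 2 * r)
    (heq : ∀ i j, dist (X i) (X j) ≤ 2 * r → dist (X i) (X j) = dist (Y i) (Y j)) :
    ∀ s : Finset (Fin n), s.Nonempty →
      ((⋂ i ∈ s, closedBall (X i) r ∩
          {y : EuclideanSpace ℝ (Fin m) | ∀ j, dist y (X i) ≤ dist y (X j)}).Nonempty ↔
       (⋂ i ∈ s, closedBall (Y i) r ∩
          {y : EuclideanSpace ℝ (Fin m) | ∀ j, dist y (Y i) ≤ dist y (Y j)}).Nonempty) := by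
  intro s _
  have hYX : ∀ i j, dist (Y i) (Y j) ≤ 2 * r → dist (Y i) (Y j) = dist (X i) (X j) :=
    fun i j h => (heq i j ((hiff i j).2 h)).symm
  exact ⟨alphaCell_nonempty_of_dist_eq heq hYX s, alphaCell_nonempty_of_dist_eq hYX heq s⟩

/-- **Local distance data determines the alpha complex.**
If two injective families of points in `ℝ^m`, each in general position, have the same
"local distance data" (which pairs are within distance `2r`, and the exact distances of
those pairs), then for every nonempty index set `s` the intersections of the
Voronoi-clipped sensing balls over `s` are simultaneously nonempty or empty; i.e. the
two configurations have the same alpha complex. -/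
theorem alpha_complex_determined_by_local_distances {m n : ℕ} (hm : 1 ≤ m) (r : ℝ) (hr : 0 < r)
    (X Y : Fin n → EuclideanSpace ℝ (Fin m))
    (hXinj : Function.Injective X) (hYinj : Function.Injective Y)
    (hXgp : ∀ s : Finset (EuclideanSpace ℝ (Fin m)), ↑s ⊆ Set.range X → s.card ≤ m + 1 →
      AffineIndependent ℝ (fun p : s => (p : EuclideanSpace ℝ (Fin m))))
    (hYgp : ∀ s : Finset (EuclideanSpace ℝ (Fin m)), ↑s ⊆ Set.range Y → s.card ≤ m + 1 →
      AffineIndependent ℝ (fun p : s => (p : EuclideanSpace ℝ (Fin m))))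
    (hiff : ∀ i j, dist (X i) (X j) ≤ 2 * r ↔ dist (Y i) (Y j) ≤ 2 * r)
    (heq : ∀ i j, dist (X i) (X j) ≤ 2 * r → dist (X i) (X j) = dist (Y i) (Y j)) :
    ∀ s : Finset (Fin n), s.Nonempty →
      ((⋂ i ∈ s, closedBall (X i) r ∩
          {y : EuclideanSpace ℝ (Fin m) | ∀ j, dist y (X i) ≤ dist y (X j)}).Nonempty ↔
       (⋂ i ∈ s, closedBall (Y i) r ∩
          {y : EuclideanSpace ℝ (Fin m) | ∀ j, dist y (Y i) ≤ dist y (Y j)}).Nonempty) :=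
  alpha_complex_determined_by_local_distances_general r X Y hiff heq
end

section
/- Let X ⊆ ℝ^m be finite, r > 0, and let τ ⊆ X be a nonempty affinely independent subset that is short and Gabriel. Then the circumcenter c of τ satisfies c ∈ B̄_r(x) ∩ V_x for every x ∈ τ. In particular, ⋂_{x∈τ}(B̄_r(x) ∩ V_x) ≠ ∅, i.e., τ is a simplex of the alpha complex A(X,r). -/
open Metric Set

theorem mem_closedBall_inter_voronoi_of_gabriel {α : Type*} [PseudoMetricSpace α] {X : Set α}
    {x c : α} {ρ r : ℝ} (hx : dist c x = ρ) (hshort : ρ ≤ r) (hgabriel : ∀ z ∈ X, ρ ≤ dist z c) :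
    c ∈ closedBall x r ∩ {y | ∀ z ∈ X, dist y x ≤ dist y z} := by
  refine ⟨by rwa [mem_closedBall, hx], fun z hz => ?_⟩
  rw [hx, dist_comm]
  exact hgabriel z hz

theorem short_gabriel_mem_alpha_complex_general {m : ℕ}
    (X : Finset (EuclideanSpace ℝ (Fin m))) (r : ℝ)
    (τ : Finset (EuclideanSpace ℝ (Fin m)))
    (c : EuclideanSpace ℝ (Fin m)) (ρ : ℝ)
    (hdist : ∀ x ∈ τ, dist c x = ρ) (hshort : ρ ≤ r)
    (hgabriel : ∀ x ∈ X, ρ ≤ dist x c) :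
    (∀ x ∈ τ, c ∈ closedBall x r ∩
        {y : EuclideanSpace ℝ (Fin m) | ∀ z ∈ X, dist y x ≤ dist y z}) ∧
    (⋂ x ∈ τ, closedBall x r ∩
        {y : EuclideanSpace ℝ (Fin m) | ∀ z ∈ X, dist y x ≤ dist y z}).Nonempty := by
  have hmem : ∀ x ∈ τ, c ∈ closedBall x r ∩
      {y : EuclideanSpace ℝ (Fin m) | ∀ z ∈ X, dist y x ≤ dist y z} := fun x hx =>
    mem_closedBall_inter_voronoi_of_gabriel (X := (X : Set _)) (hdist x hx) hshort hgabriel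
  exact ⟨hmem, c, mem_iInter₂.mpr hmem⟩

/-- **Short and Gabriel simplices belong to the alpha complex.**
If `τ ⊆ X` is nonempty, affinely independent, and short and Gabriel (with circumcenter `c`
and circumradius `ρ`: `c` lies in the affine span of `τ`, is at distance exactly `ρ ≤ r`
from every point of `τ`, and no point of `X` is strictly closer than `ρ` to `c`), then
`c ∈ B̄_r(x) ∩ V_x` for every `x ∈ τ`; in particular the intersection
`⋂_{x ∈ τ} (B̄_r(x) ∩ V_x)` is nonempty, i.e. `τ` is a simplex of `A(X,r)`. -/
theorem short_gabriel_mem_alpha_complex {m : ℕ}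
    (X : Finset (EuclideanSpace ℝ (Fin m))) (r : ℝ) (hr : 0 < r)
    (τ : Finset (EuclideanSpace ℝ (Fin m))) (hτX : τ ⊆ X) (hτ : τ.Nonempty)
    (hai : AffineIndependent ℝ (fun p : τ => (p : EuclideanSpace ℝ (Fin m))))
    (c : EuclideanSpace ℝ (Fin m)) (ρ : ℝ)
    (hc : c ∈ affineSpan ℝ (τ : Set (EuclideanSpace ℝ (Fin m))))
    (hdist : ∀ x ∈ τ, dist c x = ρ) (hshort : ρ ≤ r)
    (hgabriel : ∀ x ∈ X, ρ ≤ dist x c) :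
    (∀ x ∈ τ, c ∈ closedBall x r ∩
        {y : EuclideanSpace ℝ (Fin m) | ∀ z ∈ X, dist y x ≤ dist y z}) ∧
    (⋂ x ∈ τ, closedBall x r ∩
        {y : EuclideanSpace ℝ (Fin m) | ∀ z ∈ X, dist y x ≤ dist y z}).Nonempty :=
  short_gabriel_mem_alpha_complex_general X r τ c ρ hdist hshort hgabriel
end

section
/- Let X, Y : Fin n → ℝ^m be families of points in Euclidean space satisfying dist(X i, X j) = dist(Y i, Y j) for all indices i, j. Then there exists an isometric bijection φ : ℝ^m → ℝ^m (a rigid motion of Euclidean space) such that φ(X i) = Y i for all i. In other words, the pairwise distances of a finite tuple of points determine its shape up to a rigid motion of ℝ^m. -/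
/-!
Translating a base point to the origin turns equal pairwise distances into equal Gram matrices,
by polarization. Equal Gram matrices give equal norms of corresponding linear combinations, so
`∑ cᵢ vᵢ ↦ ∑ cᵢ wᵢ` is a well-defined linear isometry on the span of the `vᵢ`. In finite
dimension it extends to a linear isometry of the whole space, which is then surjective.
-/

open scoped InnerProductSpace RealInnerProductSpace

section

variable {R M E F : Type*} [Ring R] [AddCommGroup M] [Module R M]
  [SeminormedAddCommGroup E] [Module R E] [NormedAddCommGroup F] [Module R F]

theorem LinearMap.exists_linearIsometry_apply_rangeRestrict_eq (T : M →ₗ[R] E) (T' : M →ₗ[R] F)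
    (h : ∀ c, ‖T c‖ = ‖T' c‖) :
    ∃ L : LinearMap.range T →ₗᵢ[R] F, ∀ c, L (T.rangeRestrict c) = T' c := by
  have hker : LinearMap.ker T ≤ LinearMap.ker T' := fun c hc => by
    rw [LinearMap.mem_ker] at hc ⊢
    rw [← norm_eq_zero, ← h, hc, norm_zero]
  let L := (LinearMap.ker T).liftQ T' hker ∘ₗ T.quotKerEquivRange.symm.toLinearMap
  have hL : ∀ c, L (T.rangeRestrict c) = T' c := fun c => by
    have : T.quotKerEquivRange.symm (T.rangeRestrict c) = Submodule.Quotient.mk c :=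
      T.quotKerEquivRange.symm_apply_eq.mpr <| Subtype.ext (T.quotKerEquivRange_apply_mk c).symm
    simp [L, this]
  refine ⟨⟨L, fun x => ?_⟩, hL⟩
  obtain ⟨c, rfl⟩ := T.surjective_rangeRestrict x
  rw [hL, ← h]
  rfl

end

section

variable {𝕜 ι E F : Type*} [RCLike 𝕜] [NormedAddCommGroup E] [InnerProductSpace 𝕜 E]
  [NormedAddCommGroup F] [InnerProductSpace 𝕜 F]

theorem norm_linearCombination_eq_of_inner_eq {v : ι → E} {w : ι → F}
    (h : ∀ i j, ⟪v i, v j⟫_𝕜 = ⟪w i, w j⟫_𝕜) (c : ι →₀ 𝕜) :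
    ‖Finsupp.linearCombination 𝕜 v c‖ = ‖Finsupp.linearCombination 𝕜 w c‖ := by
  have : ⟪Finsupp.linearCombination 𝕜 v c, Finsupp.linearCombination 𝕜 v c⟫_𝕜 =
      ⟪Finsupp.linearCombination 𝕜 w c, Finsupp.linearCombination 𝕜 w c⟫_𝕜 := by
    simp only [Finsupp.linearCombination_apply, Finsupp.sum, sum_inner, inner_sum,
      inner_smul_left, inner_smul_right, h]
  rw [inner_self_eq_norm_sq_to_K, inner_self_eq_norm_sq_to_K] at this
  exact (sq_eq_sq₀ (norm_nonneg _) (norm_nonneg _)).mp (by exact_mod_cast this)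

end

section

variable {𝕜 ι V : Type*} [RCLike 𝕜] [NormedAddCommGroup V] [InnerProductSpace 𝕜 V]
  [FiniteDimensional 𝕜 V]

theorem exists_linearIsometryEquiv_map_eq_of_inner_eq {v w : ι → V}
    (h : ∀ i j, ⟪v i, v j⟫_𝕜 = ⟪w i, w j⟫_𝕜) :
    ∃ f : V ≃ₗᵢ[𝕜] V, ∀ i, f (v i) = w i := by
  set T := Finsupp.linearCombination 𝕜 v
  obtain ⟨L, hL⟩ := T.exists_linearIsometry_apply_rangeRestrict_eq
    (Finsupp.linearCombination 𝕜 w) (norm_linearCombination_eq_of_inner_eq h)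
  have hsurj : Function.Surjective L.extend :=
    LinearMap.injective_iff_surjective.mp L.extend.injective
  refine ⟨LinearIsometryEquiv.ofSurjective L.extend hsurj, fun i => ?_⟩
  have hvi : (T.rangeRestrict (Finsupp.single i 1) : V) = v i := by simp [T]
  rw [LinearIsometryEquiv.coe_ofSurjective, ← hvi, L.extend_apply, hL]
  simp

end

section

variable {V P : Type*} [NormedAddCommGroup V] [InnerProductSpace ℝ V] [MetricSpace P]
  [NormedAddTorsor V P]

theorem inner_vsub_vsub_eq_dist (a b p : P) :
    ⟪a -ᵥ p, b -ᵥ p⟫ = (dist a p * dist a p + dist b p * dist b p - dist a b * dist a b) / 2 := by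
  rw [real_inner_eq_norm_mul_self_add_norm_mul_self_sub_norm_sub_mul_self_div_two,
    vsub_sub_vsub_cancel_right, dist_eq_norm_vsub V, dist_eq_norm_vsub V, dist_eq_norm_vsub V]

end

theorem exists_isometryEquiv_map_eq_of_dist_eq {ι V P : Type*} [NormedAddCommGroup V]
    [InnerProductSpace ℝ V] [FiniteDimensional ℝ V] [MetricSpace P] [NormedAddTorsor V P]
    {X Y : ι → P} (h : ∀ i j, dist (X i) (X j) = dist (Y i) (Y j)) :
    ∃ φ : P ≃ᵢ P, ∀ i, φ (X i) = Y i := by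
  rcases isEmpty_or_nonempty ι with _ | ⟨⟨i₀⟩⟩
  · exact ⟨IsometryEquiv.refl P, isEmptyElim⟩
  obtain ⟨f, hf⟩ := exists_linearIsometryEquiv_map_eq_of_inner_eq (𝕜 := ℝ)
    (v := fun i => X i -ᵥ X i₀) (w := fun i => Y i -ᵥ Y i₀) fun i j => by
      simp only [inner_vsub_vsub_eq_dist, h]
  refine ⟨((IsometryEquiv.vaddConst (X i₀)).symm.trans f.toIsometryEquiv).trans
    (IsometryEquiv.vaddConst (Y i₀)), fun i => ?_⟩
  simp [hf]

/-- **Pairwise distances determine a tuple of points up to rigid motion.**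
If two families `X Y : Fin n → ℝ^m` have identical pairwise distances, then there is an
isometric bijection (rigid motion) `φ` of `ℝ^m` carrying `X i` to `Y i` for every `i`. -/
theorem exists_isometryEquiv_of_pairwise_dist_eq {m n : ℕ}
    (X Y : Fin n → EuclideanSpace ℝ (Fin m))
    (h : ∀ i j, dist (X i) (X j) = dist (Y i) (Y j)) :
    ∃ φ : EuclideanSpace ℝ (Fin m) ≃ᵢ EuclideanSpace ℝ (Fin m), ∀ i, φ (X i) = Y i :=
  exists_isometryEquiv_map_eq_of_dist_eq (V := EuclideanSpace ℝ (Fin m)) h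
end

section
/- Let s and t be k-simplices in Euclidean space ℝ^m (affinely independent (k+1)-tuples) with dist(s_i, s_j) = dist(t_i, t_j) for all indices i, j, and let x, y ∈ ℝ^m be points with dist(x, s_i) = dist(y, t_i) for all i. Then dist(x, circumcenter(s)) < circumradius(s) if and only if dist(y, circumcenter(t)) < circumradius(t). In other words, whether an additional point lies in the interior of the circumball of a simplex is determined by its distances to the vertices together with the pairwise vertex distances. -/
/-!
Squared distances between affine combinations of points are quadratic forms in the weights whose
coefficients are the squared pairwise distances of the points. Hence congruent families (same
pairwise distances) have congruent affine combinations, and adjoining `x` to the vertices of `s`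
and `y` to those of `t` keeps the two families congruent. Writing the circumcenter of `t` as an
affine combination of its vertices, the same combination of the vertices of `s` is equidistant
from them, so it is the circumcenter of `s`; the circumradii and the distances from `x` and `y`
to the circumcenters then agree.
-/

open Finset
open scoped Congruent

variable {ι V₁ V₂ P₁ P₂ : Type*}
  [NormedAddCommGroup V₁] [InnerProductSpace ℝ V₁] [MetricSpace P₁] [NormedAddTorsor V₁ P₁]
  [NormedAddCommGroup V₂] [InnerProductSpace ℝ V₂] [MetricSpace P₂] [NormedAddTorsor V₂ P₂]

namespace Congruent

variable {p₁ : ι → P₁} {p₂ : ι → P₂}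

theorem dist_affineCombination_eq (h : p₁ ≅ p₂) {s : Finset ι} {w w' : ι → ℝ}
    (hw : ∑ i ∈ s, w i = 1) (hw' : ∑ i ∈ s, w' i = 1) :
    dist (s.affineCombination ℝ p₁ w) (s.affineCombination ℝ p₁ w') =
      dist (s.affineCombination ℝ p₂ w) (s.affineCombination ℝ p₂ w') := by
  rw [← mul_self_inj dist_nonneg dist_nonneg, EuclideanGeometry.dist_affineCombination p₁ hw hw',
    EuclideanGeometry.dist_affineCombination p₂ hw hw']
  simp_rw [h.dist_eq]

theorem optionElim (h : p₁ ≅ p₂) {x₁ : P₁} {x₂ : P₂}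
    (hx : ∀ i, dist x₁ (p₁ i) = dist x₂ (p₂ i)) :
    (fun o : Option ι => o.elim x₁ p₁) ≅ (fun o : Option ι => o.elim x₂ p₂) := by
  refine congruent_iff_dist_eq.2 ?_
  rintro (_ | i) (_ | j)
  · simp
  · exact hx j
  · exact (dist_comm _ _).trans ((hx i).trans (dist_comm _ _))
  · exact h.dist_eq i j

end Congruent

theorem Finset.univ_affineCombination_optionElim [Fintype ι] (x : P₁) (p : ι → P₁) (w : ι → ℝ) :
    univ.affineCombination ℝ (fun o : Option ι => o.elim x p) (fun o => o.elim 0 w) =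
      univ.affineCombination ℝ p w := by
  simp [affineCombination_apply, weightedVSubOfPoint_apply, Fintype.sum_option]

theorem Finset.univ_affineCombination_optionElim_none [Fintype ι] (x : P₁) (p : ι → P₁) :
    univ.affineCombination ℝ (fun o : Option ι => o.elim x p) (fun o => o.elim 1 0) = x :=
  univ.affineCombination_of_eq_one_of_eq_zero _ _ (mem_univ none) rfl fun
    | some _, _, _ => rfl
    | none, _, h => absurd rfl h

theorem Congruent.dist_univ_affineCombination_eq [Fintype ι] {p₁ : ι → P₁} {p₂ : ι → P₂}
    (h : p₁ ≅ p₂) {x₁ : P₁} {x₂ : P₂} (hx : ∀ i, dist x₁ (p₁ i) = dist x₂ (p₂ i))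
    {w : ι → ℝ} (hw : ∑ i, w i = 1) :
    dist x₁ (univ.affineCombination ℝ p₁ w) = dist x₂ (univ.affineCombination ℝ p₂ w) := by
  have hone : ∑ o : Option ι, o.elim (1 : ℝ) 0 = 1 := by simp [Fintype.sum_option]
  have hw' : ∑ o : Option ι, o.elim 0 w = 1 := by simpa [Fintype.sum_option] using hw
  simpa only [univ_affineCombination_optionElim_none, univ_affineCombination_optionElim] using
    (h.optionElim hx).dist_affineCombination_eq hone hw'

namespace Affine.Simplex

variable {n : ℕ} {s : Simplex ℝ P₁ n} {t : Simplex ℝ P₂ n}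

theorem circumcenter_eq_affineCombination_of_congruent (h : s.points ≅ t.points)
    {w : Fin (n + 1) → ℝ} (hw : ∑ i, w i = 1)
    (hc : t.circumcenter = univ.affineCombination ℝ t.points w) :
    s.circumcenter = univ.affineCombination ℝ s.points w := by
  refine (s.eq_circumcenter_of_dist_eq (affineCombination_mem_affineSpan hw s.points)
    (r := t.circumradius) fun i => ?_).symm
  rw [h.dist_univ_affineCombination_eq (h.dist_eq i) hw, ← hc,
    t.dist_circumcenter_eq_circumradius]

theorem circumradius_eq_of_congruent (h : s.points ≅ t.points) :
    s.circumradius = t.circumradius := by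
  obtain ⟨w, hw, hc⟩ :=
    eq_affineCombination_of_mem_affineSpan_of_fintype t.circumcenter_mem_affineSpan
  rw [← s.dist_circumcenter_eq_circumradius 0, ← t.dist_circumcenter_eq_circumradius 0,
    circumcenter_eq_affineCombination_of_congruent h hw hc, hc,
    h.dist_univ_affineCombination_eq (h.dist_eq 0) hw]

end Affine.Simplex

/-- **Membership in the open circumball is determined by distance data.**
Let `s, t` be `k`-simplices in `ℝ^m` with identical pairwise vertex distances, and let
`x, y` be points with `dist x (s.points i) = dist y (t.points i)` for all `i`. Then `x`
lies in the interior of the circumball of `s` iff `y` lies in the interior of the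
circumball of `t`. -/
theorem mem_interior_circumball_iff_of_dist_eq {m k : ℕ}
    (s t : Affine.Simplex ℝ (EuclideanSpace ℝ (Fin m)) k)
    (h : ∀ i j, dist (s.points i) (s.points j) = dist (t.points i) (t.points j))
    (x y : EuclideanSpace ℝ (Fin m))
    (hxy : ∀ i, dist x (s.points i) = dist y (t.points i)) :
    dist x s.circumcenter < s.circumradius ↔ dist y t.circumcenter < t.circumradius := by
  have hst : s.points ≅ t.points := congruent_iff_dist_eq.2 h
  obtain ⟨w, hw, hc⟩ :=
    eq_affineCombination_of_mem_affineSpan_of_fintype t.circumcenter_mem_affineSpan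
  rw [s.circumcenter_eq_affineCombination_of_congruent hst hw hc, hc,
    hst.dist_univ_affineCombination_eq hxy hw, s.circumradius_eq_of_congruent hst]
end

section
/- Let α, β > 0 and let v : ℝ → ℝ² be a curve such that for all t ≥ 0, v has derivative (α − β‖v(t)‖²) · v(t) at t, and suppose v(0) ≠ 0. Then ‖v(t)‖ → √(α/β) as t → ∞. That is, an isolated D'Orsogna sensor, feeling only the self-propulsion and friction force (α − β‖v‖²)v, approaches the asymptotic speed √(α/β). -/
/-!
Along the flow, `v t` stays a positive multiple `exp (∫₀ᵗ λ) • v 0` of `v 0`, with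
`λ = α - β‖v‖²`; hence `v` never vanishes. The Bernoulli substitution `z = ‖v‖⁻²` then turns the
speed equation into the linear relaxation `z' = 2α (β/α - z)`, so `z → β/α` exponentially fast.
-/

open Filter Set Topology

theorem eq_of_hasDerivAt_zero_of_le {E : Type*} [NormedAddCommGroup E] [NormedSpace ℝ E]
    {f : ℝ → E} {a t : ℝ} (hf : ∀ s, a ≤ s → HasDerivAt f 0 s) (ht : a ≤ t) : f t = f a :=
  constant_of_has_deriv_right_zero (fun s hs => (hf s hs.1).continuousAt.continuousWithinAt)
    (fun s hs => (hf s hs.1).hasDerivWithinAt) t ⟨ht, le_rfl⟩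

theorem eq_exp_integral_smul_of_hasDerivAt_smul {E : Type*} [NormedAddCommGroup E]
    [NormedSpace ℝ E] {v : ℝ → E} {lam : ℝ → ℝ} (hlam : ContinuousOn lam (Ici 0))
    (hv : ∀ t, 0 ≤ t → HasDerivAt v (lam t • v t) t) {t : ℝ} (ht : 0 ≤ t) :
    v t = Real.exp (∫ s in 0..t, lam s) • v 0 := by
  -- `μ` extends `lam` continuously to the whole line, so that the FTC applies at `0` as well.
  set μ : ℝ → ℝ := fun s => lam (max s 0)
  have hμ : Continuous μ :=
    hlam.comp_continuous (continuous_id.max continuous_const) fun s => le_max_right s 0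
  have hμ_eq : EqOn μ lam (Ici 0) := fun s hs => by simp only [μ, max_eq_left (mem_Ici.1 hs)]
  set Λ : ℝ → ℝ := fun u => ∫ r in 0..u, μ r
  have hΛ : ∀ s, HasDerivAt Λ (μ s) s := fun s => (hμ.integral_hasStrictDerivAt 0 s).hasDerivAt
  have hconst : ∀ s, 0 ≤ s → HasDerivAt (fun u => Real.exp (-Λ u) • v u) 0 s := fun s hs => by
    refine ((hΛ s).neg.exp.smul (hv s hs)).congr_deriv ?_
    rw [hμ_eq hs, smul_smul]
    module
  have hΛt : Λ t = ∫ s in 0..t, lam s :=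
    intervalIntegral.integral_congr (hμ_eq.mono (by simp [uIcc_of_le ht, Icc_subset_Ici_self]))
  have h := eq_of_hasDerivAt_zero_of_le hconst ht
  simp only [Λ, intervalIntegral.integral_same, neg_zero, Real.exp_zero, one_smul] at h
  rw [← hΛt, ← h, smul_smul, ← Real.exp_add, add_neg_cancel, Real.exp_zero, one_smul]

theorem tendsto_of_hasDerivAt_mul_sub {x : ℝ → ℝ} {k c : ℝ} (hk : 0 < k)
    (hx : ∀ t, 0 ≤ t → HasDerivAt x (k * (c - x t)) t) : Tendsto x atTop (𝓝 c) := by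
  have hsol : ∀ t, 0 ≤ t → x t = c + Real.exp (-k * t) * (x 0 - c) := fun t ht => by
    have h := eq_exp_integral_smul_of_hasDerivAt_smul (v := fun s => x s - c) (lam := fun _ => -k)
      continuousOn_const
      (fun s hs => ((hx s hs).sub_const c).congr_deriv (by rw [smul_eq_mul]; ring)) ht
    simp only [intervalIntegral.integral_const, sub_zero, smul_eq_mul, mul_comm t] at h
    linarith
  have hexp : Tendsto (fun t => Real.exp (-k * t)) atTop (𝓝 0) := by
    refine (Real.tendsto_exp_neg_atTop_nhds_zero.comp (tendsto_id.const_mul_atTop hk)).congr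
      fun t => ?_
    simp [neg_mul]
  have hlim := (hexp.mul_const (x 0 - c)).const_add c
  rw [zero_mul, add_zero] at hlim
  exact hlim.congr' (eventually_atTop.2 ⟨0, fun t ht => (hsol t ht).symm⟩)

theorem HasDerivAt.inv_norm_sq {E : Type*} [NormedAddCommGroup E] [InnerProductSpace ℝ E]
    {v : ℝ → E} {μ t : ℝ} (hv : HasDerivAt v (μ • v t) t) (h : v t ≠ 0) :
    HasDerivAt (fun s => (‖v s‖ ^ 2)⁻¹) (-2 * μ * (‖v t‖ ^ 2)⁻¹) t := by
  have hsq : ‖v t‖ ^ 2 ≠ 0 := by positivity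
  refine (hv.norm_sq.inv hsq).congr_deriv ?_
  rw [real_inner_smul_right, real_inner_self_eq_norm_sq]
  field_simp

/-- **An isolated D'Orsogna sensor approaches its asymptotic speed.**
If `v : ℝ → ℝ²` satisfies `v' = (α − β‖v‖²) v` for all `t ≥ 0` with `α, β > 0` and
`v 0 ≠ 0`, then `‖v t‖ → √(α/β)` as `t → ∞`. -/
theorem dOrsogna_speed_tendsto {α β : ℝ} (hα : 0 < α) (hβ : 0 < β)
    (v : ℝ → EuclideanSpace ℝ (Fin 2))
    (hv : ∀ t : ℝ, 0 ≤ t → HasDerivAt v ((α - β * ‖v t‖ ^ 2) • v t) t)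
    (h0 : v 0 ≠ 0) :
    Tendsto (fun t => ‖v t‖) atTop (nhds (Real.sqrt (α / β))) := by
  have hvc : ContinuousOn v (Ici 0) := fun t ht => (hv t ht).continuousAt.continuousWithinAt
  have hne : ∀ t, 0 ≤ t → v t ≠ 0 := fun t ht hvt => by
    have h := eq_exp_integral_smul_of_hasDerivAt_smul (by fun_prop) hv ht
    rw [hvt, eq_comm, smul_eq_zero] at h
    exact h.resolve_left (Real.exp_ne_zero _) |> h0
  have hz : ∀ t, 0 ≤ t → HasDerivAt (fun s => (‖v s‖ ^ 2)⁻¹)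
      (2 * α * (β / α - (‖v t‖ ^ 2)⁻¹)) t := fun t ht => by
    have hnorm : ‖v t‖ ≠ 0 := norm_ne_zero_iff.2 (hne t ht)
    exact ((hv t ht).inv_norm_sq (hne t ht)).congr_deriv (by field_simp; ring)
  have hlim := ((tendsto_of_hasDerivAt_mul_sub (by positivity) hz).inv₀ (by positivity)).sqrt
  simpa only [inv_inv, inv_div, Real.sqrt_sq (norm_nonneg _)] using hlim
end

section
/- Let α, β > 0 and let s : ℝ → ℝ be a function such that for all t ≥ 0, s has derivative 2(α − β·s(t))·s(t) at t, and suppose s(0) > 0. Then s(t) → α/β as t → ∞. (This is the equation satisfied by the squared speed s = ‖v‖² of an isolated D'Orsogna sensor.) -/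
/-!
Substituting `w = 1 / s - β / α` turns `s' = 2 (α - β s) s` into the linear equation
`w' = -2 α w`, so `w` decays like `exp (-2 α t)` and `s → α / β`. The substitution is legitimate
because `s` never vanishes: with the integrating factor, `s t = s 0 * exp (∫₀ᵗ 2 (α - β s))`.
-/

open Filter Set Real

section LinearODE

variable {f g : ℝ → ℝ} {a : ℝ}

theorem eq_mul_exp_integral_of_hasDerivAt (hg : ContinuousOn g (Ici a))
    (hf : ∀ t ≥ a, HasDerivAt f (g t * f t) t) {t : ℝ} (ht : a ≤ t) :
    f t = f a * exp (∫ x in a..t, g x) := by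
  set I : ℝ → ℝ := fun u => ∫ x in a..u, g x
  have hI_cont : ContinuousOn I (Icc a t) := by
    rw [← uIcc_of_le ht]
    exact intervalIntegral.continuousOn_primitive_interval
      ((hg.mono fun x hx => (uIcc_of_le ht ▸ hx).1).integrableOn_compact isCompact_uIcc)
  have hI_deriv : ∀ u ≥ a, HasDerivWithinAt I (g u) (Ici u) u := fun u hu =>
    have hsub : Ioi u ⊆ Ici a := Ioi_subset_Ici hu
    intervalIntegral.integral_hasDerivWithinAt_right
      ((hg.mono Icc_subset_Ici_self).intervalIntegrable_of_Icc hu)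
      ((hg.mono hsub).stronglyMeasurableAtFilter_nhdsWithin measurableSet_Ioi u)
      ((hg u hu).mono hsub)
  have hconst : ∀ u ∈ Icc a t, f u * exp (-I u) = f a * exp (-I a) := by
    refine constant_of_has_deriv_right_zero ?_ fun u hu => ?_
    · exact (continuousOn_of_forall_continuousAt fun u hu => (hf u hu.1).continuousAt).mul
        (hI_cont.neg.rexp)
    · have h := (hf u hu.1).hasDerivWithinAt.mul (hI_deriv u hu.1).neg.exp
      exact h.congr_deriv (by ring)
  have h := hconst t ⟨ht, le_rfl⟩
  simp only [I, intervalIntegral.integral_same, neg_zero, exp_zero, mul_one] at h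
  rw [← h, mul_assoc, ← exp_add, neg_add_cancel, exp_zero, mul_one]

theorem eq_mul_exp_of_hasDerivAt_const_mul {c : ℝ} (hf : ∀ t ≥ a, HasDerivAt f (c * f t) t)
    {t : ℝ} (ht : a ≤ t) : f t = f a * exp (c * (t - a)) := by
  rw [eq_mul_exp_integral_of_hasDerivAt continuousOn_const hf ht, intervalIntegral.integral_const,
    smul_eq_mul, mul_comm c]

end LinearODE

section Logistic

variable {α β : ℝ} {s : ℝ → ℝ}

theorem logistic_pos (hs : ∀ t ≥ 0, HasDerivAt s (2 * (α - β * s t) * s t) t) (h0 : 0 < s 0)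
    {t : ℝ} (ht : 0 ≤ t) : 0 < s t := by
  have hg : ContinuousOn (fun u => 2 * (α - β * s u)) (Ici 0) :=
    continuousOn_of_forall_continuousAt fun u hu => by
      have := (hs u hu).continuousAt
      fun_prop
  rw [eq_mul_exp_integral_of_hasDerivAt hg hs ht]
  positivity

theorem logistic_inv_sub_eq (hα : α ≠ 0)
    (hs : ∀ t ≥ 0, HasDerivAt s (2 * (α - β * s t) * s t) t) (h0 : 0 < s 0)
    {t : ℝ} (ht : 0 ≤ t) :
    (s t)⁻¹ - β / α = ((s 0)⁻¹ - β / α) * exp (-(2 * α) * t) := by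
  have hw : ∀ u ≥ 0, HasDerivAt (fun u => (s u)⁻¹ - β / α) (-(2 * α) * ((s u)⁻¹ - β / α)) u := by
    intro u hu
    have hsu := (logistic_pos hs h0 hu).ne'
    refine (((hs u hu).inv hsu).sub_const (β / α)).congr_deriv ?_
    field_simp
  simpa using eq_mul_exp_of_hasDerivAt_const_mul hw ht

end Logistic

/-- **The squared speed of an isolated D'Orsogna sensor approaches `α/β`.**
If `s : ℝ → ℝ` satisfies `s' = 2(α − β s) s` for all `t ≥ 0` with `α, β > 0` and
`s 0 > 0`, then `s t → α/β` as `t → ∞`. -/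
theorem dOrsogna_squared_speed_tendsto {α β : ℝ} (hα : 0 < α) (hβ : 0 < β)
    (s : ℝ → ℝ)
    (hs : ∀ t : ℝ, 0 ≤ t → HasDerivAt s (2 * (α - β * s t) * s t) t)
    (h0 : 0 < s 0) :
    Tendsto s atTop (nhds (α / β)) := by
  have hexp : Tendsto (fun t : ℝ => exp (-(2 * α) * t)) atTop (nhds 0) :=
    tendsto_exp_atBot.comp (tendsto_id.const_mul_atTop_of_neg (by linarith))
  have hinv : Tendsto (fun t => ((s 0)⁻¹ - β / α) * exp (-(2 * α) * t) + β / α) atTop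
      (nhds (β / α)) := by
    simpa using (hexp.const_mul ((s 0)⁻¹ - β / α)).add_const (β / α)
  have hlim := hinv.inv₀ (by positivity)
  rw [inv_div] at hlim
  refine hlim.congr' ((eventually_ge_atTop 0).mono fun t ht => ?_)
  rw [← logistic_inv_sub_eq hα.ne' hs h0 ht, sub_add_cancel, inv_inv]
end
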